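/- For any finite connected simple graph G, mobmv(G ∨ K₁) = μ₂(G) + 1. -/

import Mathlib

open SimpleGraph

variable {V : Type*} {W : Type*}

/-- `S` is a general position set of `G`: no shortest path of `G` contains more than two
vertices of `S`. -/
def IsGenPosSet (G : SimpleGraph V) (S : Set V) : Prop :=
  ∀ ⦃u v : V⦄ (p : G.Walk u v), p.IsPath → p.length = G.dist u v →
    (S ∩ {x | x ∈ p.support}).ncard ≤ 2

/-- `S` is a mutual visibility set of `G`: any two vertices of `S` are joined by a shortest
path containing no further vertex of `S`. -/
def IsMutVisSet (G : SimpleGraph V) (S : Set V) : Prop :=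
  ∀ ⦃u⦄, u ∈ S → ∀ ⦃v⦄, v ∈ S → ∃ p : G.Walk u v,
    p.IsPath ∧ p.length = G.dist u v ∧ ∀ x ∈ p.support, x ∈ S → x = u ∨ x = v

/-- A legal move (with respect to the position property `P`) of a configuration of `t` robots
on distinct vertices: one robot moves to an adjacent unoccupied vertex, and the resulting set
of occupied vertices again satisfies `P`. -/
def LegalMove (G : SimpleGraph V) (P : Set V → Prop) {t : ℕ} (f g : Fin t ↪ V) : Prop :=
  ∃ i : Fin t, G.Adj (f i) (g i) ∧ g i ∉ Set.range ⇑f ∧ (∀ j, j ≠ i → g j = f j) ∧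
    P (Set.range ⇑g)

/-- A configuration is a mobile `P`-configuration if it satisfies `P` and there is a sequence
of legal moves starting from it such that every vertex is visited by some robot. -/
def IsMobileConfig (G : SimpleGraph V) (P : Set V → Prop) {t : ℕ} (f : Fin t ↪ V) : Prop :=
  P (Set.range ⇑f) ∧ ∃ (N : ℕ) (c : ℕ → (Fin t ↪ V)), c 0 = f ∧
    (∀ k < N, LegalMove G P (c k) (c (k + 1))) ∧ ∀ v : V, ∃ k ≤ N, ∃ i, c k i = v

/-- A configuration is completely mobile if it is mobile and moreover every robot can visit
every vertex via a sequence of legal moves. -/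
def IsCompletelyMobileConfig (G : SimpleGraph V) (P : Set V → Prop) {t : ℕ}
    (f : Fin t ↪ V) : Prop :=
  IsMobileConfig G P f ∧ ∀ (v : V) (i : Fin t), ∃ (N : ℕ) (c : ℕ → (Fin t ↪ V)), c 0 = f ∧
    (∀ k < N, LegalMove G P (c k) (c (k + 1))) ∧ ∃ k ≤ N, c k i = v

/-- The mobile general position number `mob(G)`. -/
noncomputable def mobGP (G : SimpleGraph V) : ℕ :=
  sSup {t : ℕ | ∃ f : Fin t ↪ V, IsMobileConfig G (IsGenPosSet G) f}

/-- The completely mobile general position number `mob*(G)`. -/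
noncomputable def cmobGP (G : SimpleGraph V) : ℕ :=
  sSup {t : ℕ | ∃ f : Fin t ↪ V, IsCompletelyMobileConfig G (IsGenPosSet G) f}

/-- The mobile mutual visibility number `mobmv(G)`. -/
noncomputable def mobMV (G : SimpleGraph V) : ℕ :=
  sSup {t : ℕ | ∃ f : Fin t ↪ V, IsMobileConfig G (IsMutVisSet G) f}

/-- The completely mobile mutual visibility number `mobmv*(G)`. -/
noncomputable def cmobMV (G : SimpleGraph V) : ℕ :=
  sSup {t : ℕ | ∃ f : Fin t ↪ V, IsCompletelyMobileConfig G (IsMutVisSet G) f}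

/-- The mutual visibility number `μ(G)`. -/
noncomputable def muMV (G : SimpleGraph V) : ℕ :=
  sSup {n : ℕ | ∃ S : Set V, IsMutVisSet G S ∧ S.ncard = n}

/-- `μ₂(G)`: the largest cardinality of a mutual visibility set whose vertices are pairwise at
distance at most `2`. -/
noncomputable def muMV2 (G : SimpleGraph V) : ℕ :=
  sSup {n : ℕ | ∃ S : Set V, IsMutVisSet G S ∧ (∀ u ∈ S, ∀ v ∈ S, G.dist u v ≤ 2) ∧
    S.ncard = n}

/-- The join `G ∨ H` of two graphs: the disjoint union together with all edges between the
two vertex sets. -/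
def graphJoin (G : SimpleGraph V) (H : SimpleGraph W) : SimpleGraph (V ⊕ W) where
  Adj x y := match x, y with
    | Sum.inl a, Sum.inl b => G.Adj a b
    | Sum.inr a, Sum.inr b => H.Adj a b
    | Sum.inl _, Sum.inr _ => True
    | Sum.inr _, Sum.inl _ => True
  symm := ⟨by rintro (a | a) (b | b) h <;> simp_all <;> exact h.symm⟩
  loopless := ⟨by rintro (a | a) h <;> simp_all⟩

/-- The strong product `G ⊠ H` of two graphs. -/
def strongProd (G : SimpleGraph V) (H : SimpleGraph W) : SimpleGraph (V × W) where
  Adj x y := (x.1 = y.1 ∧ H.Adj x.2 y.2) ∨ (x.2 = y.2 ∧ G.Adj x.1 y.1) ∨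
    (G.Adj x.1 y.1 ∧ H.Adj x.2 y.2)
  symm := ⟨by
    rintro ⟨a, b⟩ ⟨c, d⟩ (⟨h1, h2⟩ | ⟨h1, h2⟩ | ⟨h1, h2⟩)
    · exact Or.inl ⟨h1.symm, h2.symm⟩
    · exact Or.inr (Or.inl ⟨h1.symm, h2.symm⟩)
    · exact Or.inr (Or.inr ⟨h1.symm, h2.symm⟩)⟩
  loopless := ⟨by rintro ⟨a, b⟩ (⟨_, h⟩ | ⟨_, h⟩ | ⟨h, _⟩) <;> simp_all⟩

/-- A vertex `u` is a hub if any two distinct non-adjacent vertices different from `u` are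
both adjacent to `u`. -/
def IsHub (G : SimpleGraph V) (u : V) : Prop :=
  ∀ ⦃w₁ w₂ : V⦄, w₁ ≠ u → w₂ ≠ u → w₁ ≠ w₂ → ¬G.Adj w₁ w₂ → G.Adj w₁ u ∧ G.Adj w₂ u

/-- A block graph: every block is complete; equivalently, the vertices of any cycle form a
clique. -/
def IsBlockGraph (G : SimpleGraph V) : Prop :=
  ∀ (v : V) (c : G.Walk v v), c.IsCycle → G.IsClique {x | x ∈ c.support}

/-- The graph obtained from the complete graph `K n` (on vertices `1, ..., n`) by attaching
one pendant vertex `0`, adjacent only to vertex `1`. -/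
def cliqueWithLeaf (n : ℕ) : SimpleGraph (Fin (n + 1)) :=
  SimpleGraph.fromRel (fun i j => (i ≠ 0 ∧ j ≠ 0) ∨ (i = 0 ∧ j = 1))

/-- `G` is (isomorphic to) a path graph. -/
def IsPathGraph (G : SimpleGraph V) : Prop :=
  ∃ n : ℕ, Nonempty (G ≃g pathGraph n)

/-! A mutual-visibility set `R` of `G ∨ K₁` containing the apex `x` restricts to a set of `G`
that is mutually visible with all distances at most `2`: in a graph of diameter `2`, mutual
visibility says exactly that two non-adjacent vertices of the set have a common neighbour outside
it, and that neighbour cannot be `x ∈ R`. So a configuration of `mobmv(G ∨ K₁)` robots, at the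
moment a robot sits on `x`, has at most `μ₂(G) + 1` robots. Conversely, robots on a `μ₂(G)`-set
of `G` together with one on `x` form a mobile configuration: the robot on `x` can step to any free
vertex `w` and back, since a set avoiding `x` is always mutually visible (through `x`). -/

open Set Sum

section MutualVisibility

variable {G : SimpleGraph V} {S : Set V}

def HasCommonNeighborOutside (G : SimpleGraph V) (S : Set V) : Prop :=
  ∀ ⦃u⦄, u ∈ S → ∀ ⦃v⦄, v ∈ S → u ≠ v → ¬G.Adj u v → ∃ w ∉ S, G.Adj u w ∧ G.Adj w v

lemma SimpleGraph.dist_eq_two_of_adj_of_adj {u v w : V} (huv : u ≠ v) (hn : ¬G.Adj u v)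
    (huw : G.Adj u w) (hwv : G.Adj w v) : G.dist u v = 2 := by
  rw [dist, edist_eq_two_iff.mpr ⟨huv, hn, w, huw, hwv.symm⟩]
  rfl

lemma exists_walk_of_hasCommonNeighborOutside (h : HasCommonNeighborOutside G S) {u v : V}
    (hu : u ∈ S) (hv : v ∈ S) : ∃ p : G.Walk u v, p.length = G.dist u v ∧ p.length ≤ 2 ∧
      ∀ x ∈ p.support, x ∈ S → x = u ∨ x = v := by
  by_cases huv : u = v
  · subst huv
    exact ⟨.nil, by simp, by simp, by simp⟩
  by_cases hadj : G.Adj u v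
  · exact ⟨.cons hadj .nil, by simp [dist_eq_one_iff_adj.2 hadj], by simp, by simp⟩
  obtain ⟨w, hwS, huw, hwv⟩ := h hu hv huv hadj
  refine ⟨.cons huw (.cons hwv .nil), ?_, by simp, ?_⟩
  · simp [SimpleGraph.dist_eq_two_of_adj_of_adj huv hadj huw hwv]
  · simp only [Walk.support_cons, Walk.support_nil, List.mem_cons, List.not_mem_nil, or_false]
    rintro x (rfl | rfl | rfl) hx
    exacts [.inl rfl, (hwS hx).elim, .inr rfl]

theorem isMutVisSet_and_dist_le_two_iff :
    (IsMutVisSet G S ∧ ∀ u ∈ S, ∀ v ∈ S, G.dist u v ≤ 2) ↔ HasCommonNeighborOutside G S := by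
  constructor
  · rintro ⟨hmv, hdist⟩ u hu v hv huv hn
    obtain ⟨p, -, hp, hpS⟩ := hmv hu hv
    have hlen : p.length = 2 := by
      have := dist_ne_zero_iff_ne_and_reachable.2 ⟨huv, p.reachable⟩
      have := mt dist_eq_one_iff_adj.1 hn
      have := hdist u hu v hv
      omega
    have huw := p.adj_getVert_succ (i := 0) (by omega)
    have hwv := p.adj_getVert_succ (i := 1) (by omega)
    rw [Walk.getVert_zero] at huw
    rw [show 1 + 1 = p.length by omega, Walk.getVert_length] at hwv
    refine ⟨p.getVert 1, fun hw => ?_, huw, hwv⟩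
    rcases hpS _ (p.getVert_mem_support 1) hw with h | h
    exacts [huw.ne h.symm, hwv.ne h]
  · intro h
    refine ⟨fun u hu v hv => ?_, fun u hu v hv => ?_⟩
    · obtain ⟨p, hp, -, hpS⟩ := exists_walk_of_hasCommonNeighborOutside h hu hv
      exact ⟨p, p.isPath_of_length_eq_dist hp, hp, hpS⟩
    · obtain ⟨p, hp, hp2, -⟩ := exists_walk_of_hasCommonNeighborOutside h hu hv
      exact hp ▸ hp2

end MutualVisibility

section Cone

variable {G : SimpleGraph V} {R : Set (V ⊕ Unit)}

lemma graphJoin_adj_inl_inr {H : SimpleGraph W} (a : V) (b : W) :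
    (graphJoin G H).Adj (inl a) (inr b) := trivial

lemma graphJoin_bot_adj_inr {x : V ⊕ Unit} (hx : x ≠ inr ()) :
    (graphJoin G (⊥ : SimpleGraph Unit)).Adj x (inr ()) := by
  rcases x with a | ⟨⟩
  · exact graphJoin_adj_inl_inr a ()
  · exact (hx rfl).elim

lemma dist_graphJoin_bot_le_two (x y : V ⊕ Unit) :
    (graphJoin G (⊥ : SimpleGraph Unit)).dist x y ≤ 2 := by
  rcases x with a | ⟨⟩ <;> rcases y with b | ⟨⟩
  · exact dist_le <|
      .cons (graphJoin_adj_inl_inr a ()) (.cons (graphJoin_adj_inl_inr b ()).symm .nil)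
  · exact (dist_le (.cons (graphJoin_adj_inl_inr a ()) .nil)).trans (by simp)
  · exact (dist_le (.cons (graphJoin_adj_inl_inr b ()).symm .nil)).trans (by simp)
  · simp

lemma hasCommonNeighborOutside_graphJoin_bot_iff (hR : inr () ∈ R) :
    HasCommonNeighborOutside (graphJoin G (⊥ : SimpleGraph Unit)) R ↔
      HasCommonNeighborOutside G (inl ⁻¹' R) := by
  constructor
  · intro h a ha b hb hab hn
    obtain ⟨z, hzR, haz, hzb⟩ := h ha hb (by simpa using hab) hn
    rcases z with c | ⟨⟩
    exacts [⟨c, hzR, haz, hzb⟩, (hzR hR).elim]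
  · intro h x hx y hy hxy hn
    rcases x with a | ⟨⟩ <;> rcases y with b | ⟨⟩
    · obtain ⟨c, hcR, hac, hcb⟩ := h hx hy (by simpa using hxy) hn
      exact ⟨inl c, hcR, hac, hcb⟩
    · exact (hn (graphJoin_adj_inl_inr a ())).elim
    · exact (hn (graphJoin_adj_inl_inr b ()).symm).elim
    · exact (hxy rfl).elim

theorem isMutVisSet_graphJoin_bot_iff (hR : inr () ∈ R) :
    IsMutVisSet (graphJoin G (⊥ : SimpleGraph Unit)) R ↔
      IsMutVisSet G (inl ⁻¹' R) ∧ ∀ u ∈ inl ⁻¹' R, ∀ v ∈ inl ⁻¹' R, G.dist u v ≤ 2 := by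
  rw [isMutVisSet_and_dist_le_two_iff, ← hasCommonNeighborOutside_graphJoin_bot_iff hR,
    ← isMutVisSet_and_dist_le_two_iff]
  simp [dist_graphJoin_bot_le_two]

theorem isMutVisSet_graphJoin_bot_of_inr_notMem (hR : inr () ∉ R) :
    IsMutVisSet (graphJoin G (⊥ : SimpleGraph Unit)) R := by
  refine (isMutVisSet_and_dist_le_two_iff.2 fun x hx y hy _ _ => ⟨inr (), hR, ?_, ?_⟩).1
  · exact graphJoin_bot_adj_inr (ne_of_mem_of_not_mem hx hR)
  · exact (graphJoin_bot_adj_inr (ne_of_mem_of_not_mem hy hR)).symm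

lemma ncard_preimage_inl_add_one [Finite V] (hR : inr () ∈ R) :
    (inl ⁻¹' R).ncard + 1 = R.ncard := by
  have hsplit : insert (inr ()) (inl '' (inl ⁻¹' R)) = R := by
    ext (a | ⟨⟩) <;> simp [hR]
  rw [← ncard_image_of_injective _ inl_injective,
    ← ncard_insert_of_notMem (a := inr ()) (by simp), hsplit]

end Cone

section Mobility

variable {G : SimpleGraph V} {P : Set V → Prop} {t : ℕ}

lemma IsMobileConfig.exists_prop_mem {f : Fin t ↪ V} (hf : IsMobileConfig G P f) (v : V) :
    ∃ g : Fin t ↪ V, P (range g) ∧ v ∈ range g := by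
  obtain ⟨hP, N, c, hc0, hmove, hvisit⟩ := hf
  obtain ⟨k, hk, i, hi⟩ := hvisit v
  refine ⟨c k, ?_, i, hi⟩
  cases k with
  | zero => rwa [hc0]
  | succ k => exact (hmove k (by omega)).choose_spec.2.2.2

lemma Function.Embedding.range_setValue_of_notMem {α β : Type*} [DecidableEq α] [DecidableEq β]
    (f : α ↪ β) (a : α) {b : β} (hb : b ∉ range f) :
    range (f.setValue a b) = insert b (range f \ {f a}) := by
  have hne {c : α} : f c ≠ b := fun h => hb ⟨c, h⟩
  ext y
  constructor
  · rintro ⟨c, rfl⟩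
    by_cases hc : c = a
    · simp [hc]
    · rw [setValue_eq_of_ne hc hne]
      exact .inr ⟨⟨c, rfl⟩, by simpa using hc⟩
  · rintro (rfl | ⟨⟨c, rfl⟩, hca⟩)
    · exact ⟨a, setValue_eq f a _⟩
    · exact ⟨c, setValue_eq_of_ne (by simpa using hca) hne⟩

lemma legalMove_setValue [DecidableEq V] {f : Fin t ↪ V} {i : Fin t} {w : V}
    (hw : w ∉ range f) (hadj : G.Adj (f i) w) (hP : P (insert w (range f \ {f i}))) :
    LegalMove G P f (f.setValue i w) := by
  refine ⟨i, by simpa using hadj, by simpa using hw, fun j hj => ?_, ?_⟩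
  · exact Function.Embedding.setValue_eq_of_ne hj fun h => hw ⟨j, h⟩
  · rwa [f.range_setValue_of_notMem i hw]

lemma legalMove_setValue_symm [DecidableEq V] {f : Fin t ↪ V} {i : Fin t} {w : V}
    (hw : w ∉ range f) (hadj : G.Adj (f i) w) (hP : P (range f)) :
    LegalMove G P (f.setValue i w) f := by
  refine ⟨i, by simpa using hadj.symm, ?_, fun j hj => ?_, hP⟩
  · rw [f.range_setValue_of_notMem i hw]
    simp only [mem_insert_iff, mem_sdiff, mem_singleton_iff, not_true_eq_false, and_false,
      or_false]
    exact fun h => hw ⟨i, h⟩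
  · exact (Function.Embedding.setValue_eq_of_ne hj fun h => hw ⟨j, h⟩).symm

theorem IsMobileConfig.of_excursions [Fintype V] {f : Fin t ↪ V} (i : Fin t) (hP : P (range f))
    (hexc : ∀ w ∉ range f, G.Adj (f i) w ∧ P (insert w (range f \ {f i}))) :
    IsMobileConfig G P f := by
  classical
  obtain ⟨l, hl⟩ : ∃ l : List V, ∀ w, w ∈ l ↔ w ∉ range f :=
    ⟨(Finset.univ.filter (· ∉ range f)).toList, by simp⟩
  -- step `2j + 1` has robot `i` on the `j`-th free vertex, even steps are `f` itself
  let c : ℕ → (Fin t ↪ V) := fun k =>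
    if h : k % 2 = 1 ∧ k / 2 < l.length then f.setValue i l[k / 2] else f
  refine ⟨hP, 2 * l.length, c, rfl, fun k hk => ?_, fun v => ?_⟩
  · rcases Nat.mod_two_eq_zero_or_one k with hk2 | hk2
    · have hw := (hl l[k / 2]).1 (List.getElem_mem _)
      have hck : c k = f := dif_neg (by omega)
      have hck1 : c (k + 1) = f.setValue i l[k / 2] := by
        simp only [c]; rw [dif_pos (by omega)]; congr 2; omega
      rw [hck, hck1]
      exact legalMove_setValue hw (hexc _ hw).1 (hexc _ hw).2
    · have hw := (hl l[k / 2]).1 (List.getElem_mem _)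
      have hck : c k = f.setValue i l[k / 2] := dif_pos ⟨hk2, by omega⟩
      have hck1 : c (k + 1) = f := dif_neg (by omega)
      rw [hck, hck1]
      exact legalMove_setValue_symm hw (hexc _ hw).1 hP
  · by_cases hv : v ∈ range f
    · obtain ⟨j, hj⟩ := hv
      exact ⟨0, by omega, j, hj⟩
    · obtain ⟨n, hn, rfl⟩ := List.getElem_of_mem ((hl v).2 hv)
      refine ⟨2 * n + 1, by omega, i, ?_⟩
      simp only [c]
      rw [dif_pos (by omega), Function.Embedding.setValue_eq]
      congr 1
      omega

end Mobility

theorem isMobileConfig_graphJoin_bot [Fintype V] {G : SimpleGraph V} {t : ℕ}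
    {f : Fin t ↪ V ⊕ Unit} (hx : inr () ∈ range f)
    (hP : IsMutVisSet (graphJoin G (⊥ : SimpleGraph Unit)) (range f)) :
    IsMobileConfig (graphJoin G (⊥ : SimpleGraph Unit))
      (IsMutVisSet (graphJoin G (⊥ : SimpleGraph Unit))) f := by
  obtain ⟨i, hi⟩ := hx
  refine .of_excursions i hP fun w hw => ?_
  have hwx : w ≠ inr () := by
    rintro rfl
    exact hw ⟨i, hi⟩
  rw [hi]
  refine ⟨(graphJoin_bot_adj_inr hwx).symm, isMutVisSet_graphJoin_bot_of_inr_notMem ?_⟩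
  simp [hwx.symm]

section MuMV2

variable [Finite V] (G : SimpleGraph V)

lemma bddAbove_muMV2_set : BddAbove {n : ℕ | ∃ S : Set V, IsMutVisSet G S ∧
    (∀ u ∈ S, ∀ v ∈ S, G.dist u v ≤ 2) ∧ S.ncard = n} :=
  ⟨Nat.card V, by rintro _ ⟨S, -, -, rfl⟩; exact ncard_le_card S⟩

lemma exists_ncard_eq_muMV2 : ∃ S : Set V, IsMutVisSet G S ∧
    (∀ u ∈ S, ∀ v ∈ S, G.dist u v ≤ 2) ∧ S.ncard = muMV2 G := by
  unfold muMV2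
  refine Nat.sSup_mem ?_ (bddAbove_muMV2_set G)
  exact ⟨0, ∅, by simp [IsMutVisSet]⟩

variable {G}

lemma ncard_le_muMV2 {S : Set V} (hS : IsMutVisSet G S) (hd : ∀ u ∈ S, ∀ v ∈ S, G.dist u v ≤ 2) :
    S.ncard ≤ muMV2 G :=
  le_csSup (bddAbove_muMV2_set G) ⟨S, hS, hd, rfl⟩

end MuMV2

theorem stmt_6_general {V : Type*} [Fintype V] (G : SimpleGraph V) :
    mobMV (graphJoin G (⊥ : SimpleGraph Unit)) = muMV2 G + 1 := by
  refine IsGreatest.csSup_eq ⟨?_, ?_⟩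
  · obtain ⟨S, hS, hd, hcard⟩ := exists_ncard_eq_muMV2 G
    set R : Set (V ⊕ Unit) := insert (inr ()) (inl '' S)
    have hR : inr () ∈ R := mem_insert _ _
    have hRS : inl ⁻¹' R = S := by ext; simp [R]
    obtain ⟨n, f, hf⟩ := R.toFinite.fin_embedding
    obtain rfl : n = muMV2 G + 1 := by
      rw [← Nat.card_fin n, ← ncard_range_of_injective f.injective, hf,
        ← ncard_preimage_inl_add_one hR, hRS, hcard]
    refine ⟨f, isMobileConfig_graphJoin_bot (hf ▸ hR) ?_⟩
    rw [hf, isMutVisSet_graphJoin_bot_iff hR, hRS]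
    exact ⟨hS, hd⟩
  · rintro t ⟨f, hf⟩
    obtain ⟨g, hg, hx⟩ := hf.exists_prop_mem (inr ())
    obtain ⟨hS, hd⟩ := (isMutVisSet_graphJoin_bot_iff hx).1 hg
    calc t = (range g).ncard := by rw [ncard_range_of_injective g.injective, Nat.card_fin]
      _ = (inl ⁻¹' range g).ncard + 1 := (ncard_preimage_inl_add_one hx).symm
      _ ≤ muMV2 G + 1 := by grw [ncard_le_muMV2 hS hd]

theorem stmt_6 {V : Type*} [Fintype V] (G : SimpleGraph V) (hconn : G.Connected) :
    mobMV (graphJoin G (⊥ : SimpleGraph Unit)) = muMV2 G + 1 :=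
  stmt_6_general G
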